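/- arXiv:2512.20109 — 3 statements merged into one kernel-verified Lean document; each statement's English description precedes it below -/
import Mathlib

section
/- Let B be an invertible real 3×3 matrix. For i ∈ {1,2,3,4} set Φᵢ = B Sᵢ Bᵀ, and for j ∈ {1,2,3,4} set nⱼ = B⁻ᵀ n̂ⱼ / ‖B⁻ᵀ n̂ⱼ‖. Then for all i, j ∈ {1,2,3,4}, nⱼ ⋅ (Φᵢ nⱼ) = 2δᵢⱼ / ‖B⁻ᵀ n̂ⱼ‖², where δᵢⱼ is the Kronecker delta. -/
/-!
Since `Φᵢ = B Sᵢ Bᵀ`, the quadratic form of `Φᵢ` at `nⱼ` is that of `Sᵢ` at `Bᵀ nⱼ`, and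
`Bᵀ nⱼ = n̂ⱼ / ‖B⁻ᵀ n̂ⱼ‖`. The claim thus reduces to the identity `n̂ⱼ ⬝ Sᵢ n̂ⱼ = 2 δᵢⱼ` on the
reference tetrahedron, which is a finite computation.
-/

open Matrix

/-- The four symmetric matrices `S₁, S₂, S₃, S₄` (indexed by `Fin 4`). -/
def Smat : Fin 4 → Matrix (Fin 3) (Fin 3) ℝ :=
  ![!![0, 0, 3; 0, 0, 0; 3, 0, 0],
    !![2, -1, 0; -1, 0, 0; 0, 0, 0],
    !![0, -1, 1; -1, 2, -1; 1, -1, 0],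
    !![0, 0, 0; 0, 0, -1; 0, -1, 2]]

/-- The outward unit normals `n̂₁, n̂₂, n̂₃, n̂₄` of the reference tetrahedron,
`n̂ⱼ` being the normal to the face opposite vertex `vⱼ`. -/
noncomputable def nhat : Fin 4 → (Fin 3 → ℝ) :=
  ![![1 / Real.sqrt 3, 1 / Real.sqrt 3, 1 / Real.sqrt 3],
    ![-1, 0, 0],
    ![0, -1, 0],
    ![0, 0, -1]]

section QuadraticForm

variable {m k R : Type*} [Fintype m] [Fintype k] [CommRing R]

theorem dotProduct_mul_mul_transpose_mulVec (A : Matrix m k R) (S : Matrix k k R)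
    (x : m → R) : x ⬝ᵥ (A * S * Aᵀ) *ᵥ x = (Aᵀ *ᵥ x) ⬝ᵥ S *ᵥ (Aᵀ *ᵥ x) := by
  rw [← mulVec_mulVec, ← mulVec_mulVec, dotProduct_mulVec, ← mulVec_transpose]

theorem smul_dotProduct_mulVec_smul (S : Matrix k k R) (c : R) (x : k → R) :
    (c • x) ⬝ᵥ S *ᵥ (c • x) = c ^ 2 * (x ⬝ᵥ S *ᵥ x) := by
  rw [mulVec_smul, smul_dotProduct, dotProduct_smul, smul_eq_mul, smul_eq_mul, sq, mul_assoc]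

theorem mulVec_nonsing_inv_mulVec [DecidableEq m] (A : Matrix m m R) (hA : IsUnit A.det)
    (v : m → R) : A *ᵥ (A⁻¹ *ᵥ v) = v := by
  rw [mulVec_mulVec, mul_nonsing_inv _ hA, one_mulVec]

end QuadraticForm

theorem nhat_dotProduct_Smat_mulVec (i j : Fin 4) :
    nhat j ⬝ᵥ Smat i *ᵥ nhat j = 2 * (if i = j then 1 else 0) := by
  have h3 : Real.sqrt 3 * Real.sqrt 3 = 3 := Real.mul_self_sqrt (by norm_num)
  fin_cases i <;> fin_cases j <;>
    simp [Smat, nhat, mulVec, dotProduct, Fin.sum_univ_succ] <;>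
    field_simp <;> linarith

theorem quadratic_form_Phi_at_mapped_normals
    (B : Matrix (Fin 3) (Fin 3) ℝ) (hB : IsUnit B.det) (i j : Fin 4) :
    -- `Φᵢ = B Sᵢ Bᵀ`
    let Phi := B * Smat i * B.transpose
    -- `nⱼ = B⁻ᵀ n̂ⱼ / ‖B⁻ᵀ n̂ⱼ‖`, with the Euclidean norm `‖w‖ = √(w ⬝ᵥ w)`
    let w := ((B.transpose)⁻¹).mulVec (nhat j)
    let n := (Real.sqrt (w ⬝ᵥ w))⁻¹ • w
    n ⬝ᵥ Phi.mulVec n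
      = 2 * (if i = j then 1 else 0) / (Real.sqrt (w ⬝ᵥ w)) ^ 2 := by
  intro Phi w n
  have hBn : Bᵀ *ᵥ n = (Real.sqrt (w ⬝ᵥ w))⁻¹ • nhat j := by
    rw [mulVec_smul, mulVec_nonsing_inv_mulVec _ (by rwa [det_transpose])]
  rw [dotProduct_mul_mul_transpose_mulVec, hBn, smul_dotProduct_mulVec_smul,
    nhat_dotProduct_Smat_mulVec, inv_pow, inv_mul_eq_div]
end

section
/- (Discrete Gronwall inequality) Let Δt ≥ 0, H ≥ 0, and let (aₖ), (bₖ), (cₖ), (dₖ) be sequences of nonnegative real numbers such that for every integer N ≥ 0, a_N + Δt ∑_{k=0}^{N} bₖ ≤ Δt ∑_{k=0}^{N} dₖ aₖ + Δt ∑_{k=0}^{N} cₖ + H. Suppose Δt dₖ < 1 for all k. Then for every integer N ≥ 0, a_N + Δt ∑_{k=0}^{N} bₖ ≤ exp( Δt ∑_{k=0}^{N} dₖ / (1 − Δt dₖ) ) ( Δt ∑_{k=0}^{N} cₖ + H ). -/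
/-!
With `w k = Δt * d k` and `S N = Δt * ∑ c + H` (nondecreasing), the left-hand side `x N` satisfies
`x N ≤ ∑_{k ≤ N} w k * x k + S N`. Strong induction gives `x N ≤ P (N + 1) * S N` for
`P n = ∏_{k < n} (1 - w k)⁻¹`: the `k = N` term is absorbed into the left side, leaving the factor
`1 - w N`, and the earlier terms sum to at most `(P N - 1) * S N` by a telescoping identity.
Finally `(1 - w)⁻¹ = 1 + w / (1 - w) ≤ exp (w / (1 - w))`.
-/

open Finset

section LinearOrderedField

variable {K : Type*} [Field K] {w : ℕ → K}

theorem prod_range_inv_one_sub_eq_one_add_sum (hw : ∀ k, w k ≠ 1) (n : ℕ) :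
    ∏ k ∈ range n, (1 - w k)⁻¹
      = 1 + ∑ k ∈ range n, w k * ∏ j ∈ range (k + 1), (1 - w j)⁻¹ := by
  induction n with
  | zero => simp
  | succ n ih =>
    have hn : 1 - w n ≠ 0 := sub_ne_zero.2 (hw n).symm
    rw [sum_range_succ, ← add_assoc, ← ih, prod_range_succ]
    field_simp
    ring

variable [LinearOrder K] [IsStrictOrderedRing K]

theorem le_prod_inv_one_sub_mul_of_le_sum_mul_add {x S : ℕ → K}
    (hw₀ : ∀ k, 0 ≤ w k) (hw₁ : ∀ k, w k < 1) (hS : Monotone S)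
    (hx : ∀ N, x N ≤ ∑ k ∈ range (N + 1), w k * x k + S N) (N : ℕ) :
    x N ≤ (∏ k ∈ range (N + 1), (1 - w k)⁻¹) * S N := by
  induction N using Nat.strong_induction_on with
  | _ N ih =>
    have hpos : ∀ k, 0 < 1 - w k := fun k => sub_pos.2 (hw₁ k)
    have hP : ∀ n, 0 ≤ ∏ k ∈ range n, (1 - w k)⁻¹ := fun n =>
      prod_nonneg fun k _ => (inv_pos.2 (hpos k)).le
    have hpast : ∑ k ∈ range N, w k * x k ≤ (∏ k ∈ range N, (1 - w k)⁻¹ - 1) * S N := by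
      calc ∑ k ∈ range N, w k * x k
          ≤ ∑ k ∈ range N, w k * ((∏ j ∈ range (k + 1), (1 - w j)⁻¹) * S N) := by
            refine sum_le_sum fun k hk => mul_le_mul_of_nonneg_left ?_ (hw₀ k)
            have hkN := mem_range.1 hk
            exact (ih k hkN).trans (mul_le_mul_of_nonneg_left (hS (by omega)) (hP _))
        _ = (∏ k ∈ range N, (1 - w k)⁻¹ - 1) * S N := by
            rw [prod_range_inv_one_sub_eq_one_add_sum fun k => (hw₁ k).ne, add_sub_cancel_left,
              sum_mul]
            exact sum_congr rfl fun k _ => by ring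
    have hcurrent : (1 - w N) * x N ≤ (∏ k ∈ range N, (1 - w k)⁻¹) * S N := by
      have := hx N
      rw [sum_range_succ] at this
      linarith
    calc x N = (1 - w N)⁻¹ * ((1 - w N) * x N) := by field_simp [(hpos N).ne']
      _ ≤ (1 - w N)⁻¹ * ((∏ k ∈ range N, (1 - w k)⁻¹) * S N) :=
          mul_le_mul_of_nonneg_left hcurrent (inv_pos.2 (hpos N)).le
      _ = (∏ k ∈ range (N + 1), (1 - w k)⁻¹) * S N := by rw [prod_range_succ]; ring

end LinearOrderedField

theorem Real.inv_one_sub_le_exp_div_one_sub {w : ℝ} (hw : w < 1) :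
    (1 - w)⁻¹ ≤ Real.exp (w / (1 - w)) := by
  have h : (1 - w)⁻¹ = w / (1 - w) + 1 := by field_simp [(sub_pos.2 hw).ne']; ring
  exact h ▸ Real.add_one_le_exp _

theorem Real.prod_inv_one_sub_le_exp_sum {ι : Type*} {s : Finset ι} {w : ι → ℝ}
    (hw : ∀ i ∈ s, w i < 1) :
    ∏ i ∈ s, (1 - w i)⁻¹ ≤ Real.exp (∑ i ∈ s, w i / (1 - w i)) := by
  rw [Real.exp_sum]
  exact prod_le_prod (fun i hi => (inv_pos.2 (sub_pos.2 (hw i hi))).le)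
    fun i hi => Real.inv_one_sub_le_exp_div_one_sub (hw i hi)

theorem discrete_gronwall_inequality_general
    (Δt H : ℝ) (hΔt : 0 ≤ Δt) (hH : 0 ≤ H)
    (a b c d : ℕ → ℝ)
    (hb : ∀ k, 0 ≤ b k) (hc : ∀ k, 0 ≤ c k) (hd : ∀ k, 0 ≤ d k)
    (hyp : ∀ N : ℕ,
      a N + Δt * ∑ k ∈ range (N + 1), b k
        ≤ Δt * ∑ k ∈ range (N + 1), d k * a k
          + Δt * ∑ k ∈ range (N + 1), c k + H)
    (hsmall : ∀ k, Δt * d k < 1) :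
    ∀ N : ℕ,
      a N + Δt * ∑ k ∈ range (N + 1), b k
        ≤ Real.exp (Δt * ∑ k ∈ range (N + 1), d k / (1 - Δt * d k))
            * (Δt * ∑ k ∈ range (N + 1), c k + H) := by
  set x : ℕ → ℝ := fun N => a N + Δt * ∑ k ∈ range (N + 1), b k
  set S : ℕ → ℝ := fun N => Δt * ∑ k ∈ range (N + 1), c k + H
  have hS : Monotone S := fun m n hmn => by
    simp only [S]
    gcongr
    exact fun k _ _ => hc k
  have hax : ∀ k, a k ≤ x k := fun k =>
    le_add_of_nonneg_right (mul_nonneg hΔt (sum_nonneg fun j _ => hb j))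
  have hx : ∀ N, x N ≤ ∑ k ∈ range (N + 1), Δt * d k * x k + S N := fun N => by
    calc x N ≤ Δt * ∑ k ∈ range (N + 1), d k * a k + S N := by simp only [x, S]; linarith [hyp N]
      _ ≤ ∑ k ∈ range (N + 1), Δt * d k * x k + S N := by
        rw [mul_sum]
        refine add_le_add_left (sum_le_sum fun k _ => ?_) _
        rw [← mul_assoc]
        exact mul_le_mul_of_nonneg_left (hax k) (mul_nonneg hΔt (hd k))
  have hS₀ : ∀ N, 0 ≤ S N := fun N => add_nonneg (mul_nonneg hΔt (sum_nonneg fun k _ => hc k)) hH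
  intro N
  have hexp : Δt * ∑ k ∈ range (N + 1), d k / (1 - Δt * d k)
      = ∑ k ∈ range (N + 1), Δt * d k / (1 - Δt * d k) := by
    simp only [mul_sum, mul_div_assoc]
  rw [hexp]
  calc x N ≤ (∏ k ∈ range (N + 1), (1 - Δt * d k)⁻¹) * S N :=
        le_prod_inv_one_sub_mul_of_le_sum_mul_add (fun k => mul_nonneg hΔt (hd k)) hsmall hS hx N
    _ ≤ Real.exp (∑ k ∈ range (N + 1), Δt * d k / (1 - Δt * d k)) * S N :=
        mul_le_mul_of_nonneg_right (Real.prod_inv_one_sub_le_exp_sum fun k _ => hsmall k) (hS₀ N)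

theorem discrete_gronwall_inequality
    (Δt H : ℝ) (hΔt : 0 ≤ Δt) (hH : 0 ≤ H)
    (a b c d : ℕ → ℝ)
    (ha : ∀ k, 0 ≤ a k) (hb : ∀ k, 0 ≤ b k) (hc : ∀ k, 0 ≤ c k) (hd : ∀ k, 0 ≤ d k)
    (hyp : ∀ N : ℕ,
      a N + Δt * ∑ k ∈ range (N + 1), b k
        ≤ Δt * ∑ k ∈ range (N + 1), d k * a k
          + Δt * ∑ k ∈ range (N + 1), c k + H)
    (hsmall : ∀ k, Δt * d k < 1) :
    ∀ N : ℕ,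
      a N + Δt * ∑ k ∈ range (N + 1), b k
        ≤ Real.exp (Δt * ∑ k ∈ range (N + 1), d k / (1 - Δt * d k))
            * (Δt * ∑ k ∈ range (N + 1), c k + H) :=
  discrete_gronwall_inequality_general Δt H hΔt hH a b c d hb hc hd hyp hsmall
end

section
/- Let H be a real Hilbert space, let a < b be real numbers, and let v : ℝ → H be twice continuously differentiable on [a,b]. Then ‖ (v(a) + v(b))/2 − v((a+b)/2) ‖² ≤ ((b−a)³ / 48) ∫_a^b ‖v''(t)‖² dt. -/
/-!
Expanding `v` to first order about the midpoint `m` with integral remainder on each half, the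
first-order terms cancel and the error is a sum of two integrals `∫ (x - t) v''(t) dt` over
`[a, m]` and `[m, b]`. Cauchy–Schwarz bounds each by `((b - a) / 2)³ / 3` times the integral of
`‖v''‖²` over that half, and `(X + Y)² ≤ 2 (X² + Y²)` combines them. The vector case reduces to
the scalar one by testing the error against a norming functional.
-/

open MeasureTheory Set

theorem sq_integral_mul_le_integral_sq_mul_integral_sq {α : Type*} [MeasurableSpace α]
    {μ : Measure α} {f g : α → ℝ} (hf : Integrable (fun x => f x ^ 2) μ)
    (hg : Integrable (fun x => g x ^ 2) μ) (hfg : Integrable (fun x => f x * g x) μ) :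
    (∫ x, f x * g x ∂μ) ^ 2 ≤ (∫ x, f x ^ 2 ∂μ) * ∫ x, g x ^ 2 ∂μ := by
  have hquad : ∀ s : ℝ, 0 ≤ (∫ x, f x ^ 2 ∂μ) * (s * s) + 2 * (∫ x, f x * g x ∂μ) * s
      + ∫ x, g x ^ 2 ∂μ := by
    intro s
    have hexpand : ∫ x, (s * f x + g x) ^ 2 ∂μ = (∫ x, f x ^ 2 ∂μ) * (s * s)
        + 2 * (∫ x, f x * g x ∂μ) * s + ∫ x, g x ^ 2 ∂μ := by
      calc ∫ x, (s * f x + g x) ^ 2 ∂μ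
          = ∫ x, (f x ^ 2 * (s * s) + 2 * s * (f x * g x) + g x ^ 2) ∂μ := by
            congr 1 with x; ring
        _ = _ := by
            rw [integral_add ((hf.mul_const _).fun_add (hfg.const_mul _)) hg,
              integral_add (hf.mul_const _) (hfg.const_mul _), integral_mul_const,
              integral_const_mul]
            ring
    exact hexpand ▸ integral_nonneg fun x => sq_nonneg _
  have := discrim_le_zero hquad
  rw [discrim] at this
  linarith

theorem intervalIntegral.sq_integral_mul_le_integral_sq_mul_integral_sq {f g : ℝ → ℝ}
    {a b : ℝ} {μ : Measure ℝ} (hf : IntervalIntegrable (fun x => f x ^ 2) μ a b)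
    (hg : IntervalIntegrable (fun x => g x ^ 2) μ a b)
    (hfg : IntervalIntegrable (fun x => f x * g x) μ a b) :
    (∫ x in a..b, f x * g x ∂μ) ^ 2 ≤ (∫ x in a..b, f x ^ 2 ∂μ) * ∫ x in a..b, g x ^ 2 ∂μ := by
  rcases le_total a b with hab | hba
  · simp only [integral_of_le hab]
    exact _root_.sq_integral_mul_le_integral_sq_mul_integral_sq hf.1 hg.1 hfg.1
  · simp only [integral_symm b a, integral_of_le hba, neg_sq, neg_mul_neg]
    exact _root_.sq_integral_mul_le_integral_sq_mul_integral_sq hf.2 hg.2 hfg.2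

theorem taylor_integral_remainder_one_of_hasDerivAt {f f' f'' : ℝ → ℝ} {c x : ℝ}
    (hf : ∀ t ∈ uIcc c x, HasDerivAt f (f' t) t) (hf' : ∀ t ∈ uIcc c x, HasDerivAt f' (f'' t) t)
    (hint : IntervalIntegrable f'' volume c x) :
    f x - f c - (x - c) * f' c = ∫ t in c..x, (x - t) * f'' t := by
  have hderiv : ∀ t ∈ uIcc c x,
      HasDerivAt (fun t => (x - t) * f' t + f t) ((x - t) * f'' t) t := fun t ht => by
    rw [show (x - t) * f'' t = -1 * f' t + (x - t) * f'' t + f' t by ring]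
    exact (((hasDerivAt_id' t).const_sub x).mul (hf' t ht)).add (hf t ht)
  rw [intervalIntegral.integral_eq_sub_of_hasDerivAt hderiv
    (hint.continuousOn_mul (continuousOn_const.sub continuousOn_id))]
  ring

theorem integral_const_sub_sq (c x : ℝ) : ∫ t in c..x, (x - t) ^ 2 = (x - c) ^ 3 / 3 := by
  rw [intervalIntegral.integral_comp_sub_left (fun t => t ^ 2) x, integral_pow]
  ring

theorem sq_midpoint_error_le_integral_sq {f f' f'' : ℝ → ℝ} {a b : ℝ} (hab : a ≤ b)
    (hf : ∀ t ∈ Icc a b, HasDerivAt f (f' t) t) (hf' : ∀ t ∈ Icc a b, HasDerivAt f' (f'' t) t)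
    (hcont : ContinuousOn f'' (Icc a b)) :
    (2⁻¹ * (f a + f b) - f ((a + b) / 2)) ^ 2
      ≤ (b - a) ^ 3 / 48 * ∫ t in a..b, f'' t ^ 2 := by
  set m := (a + b) / 2 with hm
  have ham : a ≤ m := by linarith
  have hmb : m ≤ b := by linarith
  have hIma : uIcc m a ⊆ Icc a b := by
    rw [uIcc_of_ge ham]; exact Icc_subset_Icc le_rfl hmb
  have hImb : uIcc m b ⊆ Icc a b := by
    rw [uIcc_of_le hmb]; exact Icc_subset_Icc ham le_rfl
  have hint {x : ℝ} (hx : uIcc m x ⊆ Icc a b) {g : ℝ → ℝ} (hg : ContinuousOn g (Icc a b)) :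
      IntervalIntegrable g volume m x :=
    (hg.mono hx).intervalIntegrable
  have hweight (x : ℝ) : ContinuousOn (fun t => x - t) (Icc a b) := by fun_prop
  have hhalf {x : ℝ} (hx : uIcc m x ⊆ Icc a b) :
      (f x - f m - (x - m) * f' m) ^ 2 ≤ (x - m) ^ 3 / 3 * ∫ t in m..x, f'' t ^ 2 := by
    rw [taylor_integral_remainder_one_of_hasDerivAt (fun t ht => hf t (hx ht))
      (fun t ht => hf' t (hx ht)) (hint hx hcont), ← integral_const_sub_sq m x]
    exact intervalIntegral.sq_integral_mul_le_integral_sq_mul_integral_sq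
      (hint hx ((hweight x).pow 2)) (hint hx (hcont.pow 2)) (hint hx ((hweight x).mul hcont))
  have hsplit : ∫ t in a..b, f'' t ^ 2 = -(∫ t in m..a, f'' t ^ 2) + ∫ t in m..b, f'' t ^ 2 := by
    rw [← intervalIntegral.integral_symm, intervalIntegral.integral_add_adjacent_intervals
      (hint hIma (g := fun t => f'' t ^ 2) (hcont.pow 2)).symm
      (hint hImb (g := fun t => f'' t ^ 2) (hcont.pow 2))]
  have hleft := hhalf hIma
  have hright := hhalf hImb
  rw [show a - m = -((b - a) / 2) by linarith] at hleft
  rw [show b - m = (b - a) / 2 by linarith] at hright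
  rw [hsplit]
  linarith [sq_nonneg (f a - f m + (b - a) / 2 * f' m - (f b - f m - (b - a) / 2 * f' m))]

theorem midpoint_rule_error_bound_general
    {H : Type*} [NormedAddCommGroup H] [InnerProductSpace ℝ H]
    (a b : ℝ) (hab : a < b)
    (v v' v'' : ℝ → H)
    -- `v` is twice continuously differentiable on `[a,b]`, with first derivative `v'`
    -- and second derivative `v''`
    (hv' : ∀ t ∈ Icc a b, HasDerivAt v (v' t) t)
    (hv'' : ∀ t ∈ Icc a b, HasDerivAt v' (v'' t) t)
    (hcont : ContinuousOn v'' (Icc a b)) :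
    ‖(2 : ℝ)⁻¹ • (v a + v b) - v ((a + b) / 2)‖ ^ 2
      ≤ (b - a) ^ 3 / 48 * ∫ t in a..b, ‖v'' t‖ ^ 2 := by
  set e := (2 : ℝ)⁻¹ • (v a + v b) - v ((a + b) / 2)
  have hrhs : 0 ≤ (b - a) ^ 3 / 48 * ∫ t in a..b, ‖v'' t‖ ^ 2 :=
    mul_nonneg (by have := sub_pos.2 hab; positivity)
      (intervalIntegral.integral_nonneg hab.le fun t _ => sq_nonneg _)
  rcases eq_or_ne ‖e‖ 0 with he | he
  · simpa [he] using hrhs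
  obtain ⟨g, hg_norm, hg_e⟩ := exists_dual_vector ℝ e he
  have hge : g e = 2⁻¹ * (g (v a) + g (v b)) - g (v ((a + b) / 2)) := by
    simp [e, mul_add]
  have hg_cont : ContinuousOn (fun t => g (v'' t)) (Icc a b) :=
    g.continuous.comp_continuousOn hcont
  have hscalar := sq_midpoint_error_le_integral_sq (f := fun t => g (v t))
    (f' := fun t => g (v' t)) hab.le (fun t ht => g.hasFDerivAt.comp_hasDerivAt t (hv' t ht))
    (fun t ht => g.hasFDerivAt.comp_hasDerivAt t (hv'' t ht)) hg_cont
  have hpointwise (x : H) : g x ^ 2 ≤ ‖x‖ ^ 2 := by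
    rw [← sq_abs, ← Real.norm_eq_abs]
    exact pow_le_pow_left₀ (norm_nonneg _) (by simpa [hg_norm] using g.le_opNorm x) 2
  calc ‖e‖ ^ 2 = g e ^ 2 := by rw [hg_e]; rfl
    _ ≤ (b - a) ^ 3 / 48 * ∫ t in a..b, g (v'' t) ^ 2 := hge ▸ hscalar
    _ ≤ (b - a) ^ 3 / 48 * ∫ t in a..b, ‖v'' t‖ ^ 2 := by
      gcongr
      exact intervalIntegral.integral_mono_on hab.le
        ((hg_cont.pow 2).intervalIntegrable_of_Icc hab.le)
        ((hcont.norm.pow 2).intervalIntegrable_of_Icc hab.le) fun t _ => hpointwise _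

theorem midpoint_rule_error_bound
    {H : Type*} [NormedAddCommGroup H] [InnerProductSpace ℝ H] [CompleteSpace H]
    (a b : ℝ) (hab : a < b)
    (v v' v'' : ℝ → H)
    -- `v` is twice continuously differentiable on `[a,b]`, with first derivative `v'`
    -- and second derivative `v''`
    (hv' : ∀ t ∈ Icc a b, HasDerivAt v (v' t) t)
    (hv'' : ∀ t ∈ Icc a b, HasDerivAt v' (v'' t) t)
    (hcont : ContinuousOn v'' (Icc a b)) :
    ‖(2 : ℝ)⁻¹ • (v a + v b) - v ((a + b) / 2)‖ ^ 2
      ≤ (b - a) ^ 3 / 48 * ∫ t in a..b, ‖v'' t‖ ^ 2 :=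
  midpoint_rule_error_bound_general a b hab v v' v'' hv' hv'' hcont
end
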